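/- Let A(x) = Γ(x) if x is not an integer, A(x) = Γ(x + 1/2) if x is an integer, and B(x) = sin(π·x); for each real a let v_a be the L₁-iterated sequence of (A, B) with initial value a. Then the family contains unbounded sequences: there exists a real a such that the sequence v_a is unbounded, i.e. for every M > 0 there is an index n with |v_a(n)| > M. -/

import Mathlib

open scoped Classical

/-- The Thue–Morse sequence: `thueMorse n` is `true` iff the number of `1`s in
the binary expansion of `n` is odd. -/
def thueMorse (n : ℕ) : Bool := decide (Odd ((Nat.digits 2 n).count 1))

/-- The L₁-iterated sequence of a pair of maps `(A, B)` with initial value `a`. -/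
def L1Seq (A B : ℝ → ℝ) (a : ℝ) : ℕ → ℝ
  | 0 => a
  | n + 1 => if thueMorse n then B (L1Seq A B a n) else A (L1Seq A B a n)

/-- `A x = Γ x` if `x` is not an integer, and `A x = Γ (x + 1/2)` if `x` is an
integer. -/
noncomputable def Amap : ℝ → ℝ := fun x =>
  if ∃ m : ℤ, x = (m : ℝ) then Real.Gamma (x + 1 / 2) else Real.Gamma x

/-- `B x = sin (π x)`. -/
noncomputable def Bmap : ℝ → ℝ := fun x => Real.sin (Real.pi * x)

/-!
Choose compact intervals `Kₙ` such that the map applied at time `n` is continuous on `Kₙ` and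
maps it onto a set containing `Kₙ₊₁`; Cantor's intersection theorem then gives an initial
value `a` with `v_a n ∈ Kₙ` for all `n`. For the letter `B` take `[2j, 2j + 1/2]`, which
`sin (π ·)` maps onto `[0, 1]`. For `A` after `B` take a tiny `[δ/4, δ] ⊆ (0, 1)`, whose image
under `Γ` contains `[1/δ, 2/δ]`; for `A` after `A` take `[m + 1/4, m + 3/4]` with `m ≥ 5`,
which `Γ` stretches by a factor of at least 18 by convexity. None of these contains an
integer, where `A` would switch to `Γ (x + 1/2)`. Since `t (2 ^ k) = B` and
`t (2 ^ k + 1) = A`, the factor `BA` occurs infinitely often, and letting `δ` shrink along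
these occurrences makes the orbit unbounded.
-/

open Set Real

theorem exists_forall_mem_of_subset_image {X : Type*} [TopologicalSpace X] (f : ℕ → X → X)
    (x : X → ℕ → X) (hx0 : ∀ a, x a 0 = a) (hxs : ∀ a n, x a (n + 1) = f n (x a n))
    (K : ℕ → Set X) (hK0 : IsCompact (K 0)) (hK : ∀ n, IsClosed (K n))
    (hKne : ∀ n, (K n).Nonempty) (hf : ∀ n, ContinuousOn (f n) (K n))
    (hKf : ∀ n, K (n + 1) ⊆ f n '' K n) :
    ∃ a, ∀ n, x a n ∈ K n := by
  set S : ℕ → Set X := fun n => {a | ∀ i ≤ n, x a i ∈ K i}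
  have hS0 : S 0 = K 0 := by ext a; simp [S, hx0]
  have hS : ∀ n, S (n + 1) = S n ∩ (fun a => x a (n + 1)) ⁻¹' K (n + 1) := by
    intro n; ext a; simp [S, Nat.le_succ_iff, or_imp, forall_and]
  have hclosed : ∀ n, IsClosed (S n) ∧ ContinuousOn (fun a => x a n) (S n) := by
    intro n
    induction n with
    | zero => exact ⟨hS0 ▸ hK 0, by simp only [hx0]; exact continuousOn_id⟩
    | succ n ih =>
      have hcont : ContinuousOn (fun a => x a (n + 1)) (S n) := by
        simp only [hxs]
        exact (hf n).comp ih.2 fun a ha => ha n le_rfl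
      rw [hS]
      exact ⟨hcont.preimage_isClosed_of_isClosed ih.1 (hK _), hcont.mono inter_subset_left⟩
  have hreach : ∀ n, ∀ y ∈ K n, ∃ a ∈ S n, x a n = y := by
    intro n
    induction n with
    | zero => exact fun y hy => ⟨y, hS0 ▸ hy, hx0 y⟩
    | succ n ih =>
      intro y hy
      obtain ⟨z, hz, rfl⟩ := hKf n hy
      obtain ⟨a, ha, rfl⟩ := ih z hz
      exact ⟨a, hS n ▸ ⟨ha, by simpa [hxs] using hy⟩, hxs a n⟩
  obtain ⟨a, ha⟩ := IsCompact.nonempty_iInter_of_sequence_nonempty_isCompact_isClosed S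
    (fun n => (hS n).symm ▸ inter_subset_left)
    (fun n => let ⟨y, hy⟩ := hKne n; let ⟨a, ha, _⟩ := hreach n y hy; ⟨a, ha⟩)
    (hS0 ▸ hK0) (fun n => (hclosed n).1)
  exact ⟨a, fun n => mem_iInter.1 ha n n le_rfl⟩

theorem Nat.digits_base_pow {b : ℕ} (hb : 1 < b) (k : ℕ) :
    Nat.digits b (b ^ k) = List.replicate k 0 ++ [1] := by
  simpa [Nat.digits_of_lt b 1 one_ne_zero hb] using Nat.digits_base_pow_mul (k := k) hb one_pos

theorem thueMorse_two_pow (k : ℕ) : thueMorse (2 ^ k) = true := by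
  rw [thueMorse, Nat.digits_base_pow one_lt_two]
  simp [List.count_replicate]

theorem thueMorse_two_pow_succ_add_one (k : ℕ) : thueMorse (2 ^ (k + 1) + 1) = false := by
  have h := Nat.digits_append_digits (b := 2) (m := 2 ^ k) (n := 1) two_pos
  rw [thueMorse, show 2 ^ (k + 1) + 1 = 1 + 2 ^ (Nat.digits 2 1).length * 2 ^ k by
    simp [pow_succ]; ring, ← h, Nat.digits_base_pow one_lt_two]
  simp [List.count_replicate]

theorem one_le_Gamma_of_two_le {x : ℝ} (hx : 2 ≤ x) : 1 ≤ Gamma x :=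
  Gamma_two ▸ Gamma_strictMonoOn_Ici.monotoneOn (mem_Ici.2 le_rfl) hx hx

theorem Gamma_le_one_of_mem_Icc {x : ℝ} (hx : x ∈ Icc 1 2) : Gamma x ≤ 1 := by
  simpa [Gamma_two] using
    convexOn_Gamma.le_max_of_mem_Icc (mem_Ioi.2 one_pos) (mem_Ioi.2 two_pos) hx

theorem Gamma_mem_Icc_inv {x : ℝ} (h0 : 0 < x) (h1 : x ≤ 1) :
    Gamma x ∈ Icc (2 * x)⁻¹ x⁻¹ := by
  have hx1 : Gamma (x + 1) = x * Gamma x := Gamma_add_one h0.ne'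
  have hx2 : Gamma (x + 1 + 1) = (x + 1) * Gamma (x + 1) := Gamma_add_one (by positivity)
  have hle : Gamma (x + 1) ≤ 1 := Gamma_le_one_of_mem_Icc ⟨by linarith, by linarith⟩
  have hge : 1 ≤ Gamma (x + 1 + 1) := one_le_Gamma_of_two_le (by linarith)
  have hpos := Gamma_pos_of_pos h0
  constructor
  · rw [inv_le_iff_one_le_mul₀ (by positivity)]; nlinarith
  · rw [← one_div, le_div_iff₀ h0]; nlinarith

theorem mul_sub_le_Gamma_sub_Gamma {x z : ℝ} (hx : 5 ≤ x) (hxz : x < z) :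
    18 * (z - x) ≤ Gamma z - Gamma x := by
  have hΓ4 : Gamma 4 = 6 := by norm_num [Nat.factorial]
  have hΓ5 : Gamma 5 = 24 := by norm_num [Nat.factorial]
  have h45 : slope Gamma 4 5 ≤ slope Gamma 4 z :=
    convexOn_Gamma.slope_mono (by norm_num : (4 : ℝ) ∈ Ioi 0) ⟨by norm_num, by norm_num⟩
      ⟨mem_Ioi.2 (by linarith), by simp; linarith⟩ (by linarith)
  have hz4x : slope Gamma z 4 ≤ slope Gamma z x :=
    convexOn_Gamma.slope_mono (mem_Ioi.2 (by linarith)) ⟨by norm_num, by simp; linarith⟩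
      ⟨mem_Ioi.2 (by linarith), by simp; linarith⟩ (by linarith)
  rw [slope_comm Gamma z, slope_comm Gamma z] at hz4x
  rw [slope_def_field, slope_def_field, hΓ4, hΓ5] at h45
  rw [slope_def_field, slope_def_field, hΓ4] at hz4x
  norm_num at h45
  rw [← le_div_iff₀ (by linarith)]
  linarith

theorem Amap_eqOn_Gamma (m : ℕ) : EqOn Amap Gamma (Ioo m (m + 1)) := by
  rintro x ⟨hmx, hxm⟩
  refine if_neg ?_
  rintro ⟨k, rfl⟩
  have : (m : ℤ) < k := by exact_mod_cast hmx
  have : k < m + 1 := by exact_mod_cast hxm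
  omega

theorem continuousOn_Amap (m : ℕ) : ContinuousOn Amap (Ioo m (m + 1)) := by
  refine ContinuousOn.congr ?_ (Amap_eqOn_Gamma m)
  refine (convexOn_Gamma.continuousOn_interior).mono ?_
  rw [interior_Ioi]
  exact fun x hx => lt_of_le_of_lt (Nat.cast_nonneg m) hx.1

theorem uIcc_Gamma_subset_image_Amap {m : ℕ} {a b : ℝ} (hab : a ≤ b)
    (h : Icc a b ⊆ Ioo m (m + 1)) : uIcc (Gamma a) (Gamma b) ⊆ Amap '' Icc a b := by
  rw [((Amap_eqOn_Gamma m).mono h).image_eq, ← uIcc_of_le hab]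
  rw [← uIcc_of_le hab] at h
  exact intermediate_value_uIcc
    (((continuousOn_Amap m).mono h).congr ((Amap_eqOn_Gamma m).mono h).symm)

theorem continuous_Bmap : Continuous Bmap :=
  continuous_sin.comp (continuous_const.mul continuous_id)

theorem Icc_zero_one_subset_image_Bmap (j : ℕ) :
    Icc 0 1 ⊆ Bmap '' Icc (2 * j) (2 * j + 1 / 2) := by
  have h0 : Bmap (2 * j) = 0 := by
    simpa [Bmap, mul_comm, mul_left_comm] using sin_nat_mul_pi (2 * j)
  have h1 : Bmap (2 * j + 1 / 2) = 1 := by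
    rw [Bmap, show π * (2 * j + 1 / 2) = π / 2 + j * (2 * π) by ring, sin_add_nat_mul_two_pi,
      sin_pi_div_two]
  have := intermediate_value_Icc (by linarith : (2 * j : ℝ) ≤ 2 * j + 1 / 2)
    continuous_Bmap.continuousOn
  rwa [h0, h1] at this

/-! `anchor n = none` records that the image of the previous block covers `[0, 1]`, and
`anchor n = some y` that it covers `[y, y + 3]`; `block b s n` is the compact interval chosen
inside that window at time `n` when the letter there is `b` (`true` for `B`). -/

noncomputable def nextAnchor : Bool → Option ℝ → ℕ → Option ℝ
  | true, _, _ => none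
  | false, none, n => some (n + 6)
  | false, some y, _ => some (Gamma (⌈y⌉₊ + 1 / 4))

noncomputable def anchor : ℕ → Option ℝ
  | 0 => none
  | n + 1 => nextAnchor (thueMorse n) (anchor n) n

def window : Option ℝ → Set ℝ
  | none => Icc 0 1
  | some y => Icc y (y + 3)

noncomputable def block : Bool → Option ℝ → ℕ → Set ℝ
  | true, none, _ => Icc 0 (1 / 2)
  | true, some y, _ => Icc (2 * ⌈y / 2⌉₊) (2 * ⌈y / 2⌉₊ + 1 / 2)
  | false, none, n => Icc (4 * (n + 6 : ℝ))⁻¹ (n + 6 : ℝ)⁻¹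
  | false, some y, _ => Icc (⌈y⌉₊ + 1 / 4) (⌈y⌉₊ + 3 / 4)

section Step

variable {b : Bool} {s : Option ℝ} {n : ℕ}

theorem six_le_of_mem_nextAnchor (hs : ∀ y ∈ s, 6 ≤ y) :
    ∀ y ∈ nextAnchor b s n, 6 ≤ y := by
  rcases b with _ | _ <;> rcases s with _ | y <;> rintro z ⟨⟩
  · linarith [(n.cast_nonneg : (0 : ℝ) ≤ n)]
  · have h4 : (4 : ℝ) ≤ ⌈y⌉₊ + 1 / 4 := by linarith [Nat.le_ceil y, hs y rfl]
    have hΓ4 : Gamma 4 = 6 := by norm_num [Nat.factorial]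
    exact hΓ4 ▸ Gamma_strictMonoOn_Ici.monotoneOn (by norm_num) (by norm_num; linarith) h4

theorem isCompact_block : IsCompact (block b s n) := by
  rcases b with _ | _ <;> rcases s with _ | y <;> exact isCompact_Icc

theorem block_nonempty : (block b s n).Nonempty := by
  rcases b with _ | _ <;> rcases s with _ | y <;> refine nonempty_Icc.2 ?_
  · gcongr; linarith
  all_goals norm_num

theorem block_subset_window (hs : ∀ y ∈ s, 0 ≤ y) : block b s n ⊆ window s := by
  rcases b with _ | _ <;> rcases s with _ | y <;> refine Icc_subset_Icc ?_ ?_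
  · positivity
  · exact inv_le_one_of_one_le₀ (by linarith [(n.cast_nonneg : (0 : ℝ) ≤ n)])
  · linarith [Nat.le_ceil y]
  · linarith [Nat.ceil_lt_add_one (hs y rfl)]
  · rfl
  · norm_num
  · linarith [Nat.le_ceil (y / 2)]
  · linarith [Nat.ceil_lt_add_one (div_nonneg (hs y rfl) two_pos.le)]

theorem exists_block_false_subset_Ioo (hs : ∀ y ∈ s, 0 ≤ y) :
    ∃ m : ℕ, block false s n ⊆ Ioo m (m + 1) := by
  rcases s with _ | y <;> dsimp only [block]
  · refine ⟨0, Icc_subset_Ioo ?_ ?_⟩ <;> rw [Nat.cast_zero]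
    · positivity
    · exact (zero_add (1 : ℝ)).symm ▸
        inv_lt_one_of_one_lt₀ (by linarith [(n.cast_nonneg : (0 : ℝ) ≤ n)])
  · exact ⟨⌈y⌉₊, Icc_subset_Ioo (by linarith) (by linarith)⟩

theorem continuousOn_block (hs : ∀ y ∈ s, 0 ≤ y) :
    ContinuousOn (if b then Bmap else Amap) (block b s n) := by
  rcases b with _ | _
  · obtain ⟨m, hm⟩ := exists_block_false_subset_Ioo (n := n) hs
    exact (continuousOn_Amap m).mono hm
  · exact continuous_Bmap.continuousOn

theorem window_subset_image (hs : ∀ y ∈ s, 6 ≤ y) :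
    window (nextAnchor b s n) ⊆ (if b then Bmap else Amap) '' block b s n := by
  rcases b with _ | _
  · have hs0 : ∀ y ∈ s, 0 ≤ y := fun y hy => by linarith [hs y hy]
    obtain ⟨m, hm⟩ := exists_block_false_subset_Ioo (n := n) hs0
    rcases s with _ | y <;> dsimp only [window, nextAnchor, block] at hm ⊢
    · have hN : (6 : ℝ) ≤ n + 6 := by linarith [(n.cast_nonneg : (0 : ℝ) ≤ n)]
      have hup := (Gamma_mem_Icc_inv (x := (n + 6 : ℝ)⁻¹) (by positivity)
        (inv_le_one_of_one_le₀ (by linarith))).2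
      have hlow := (Gamma_mem_Icc_inv (x := (4 * (n + 6) : ℝ)⁻¹) (by positivity)
        (inv_le_one_of_one_le₀ (by linarith))).1
      rw [inv_inv] at hup
      rw [show (2 * (4 * (n + 6) : ℝ)⁻¹)⁻¹ = 2 * (n + 6) by field_simp; ring] at hlow
      refine (Icc_subset_Icc hup (by linarith)).trans <| (Icc_subset_uIcc').trans <|
        uIcc_Gamma_subset_image_Amap ?_ hm
      gcongr; linarith
    · have hy := hs y rfl
      have hy' := Nat.le_ceil y
      have hslope := mul_sub_le_Gamma_sub_Gamma (x := ⌈y⌉₊ + 1 / 4) (z := ⌈y⌉₊ + 3 / 4)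
        (by linarith) (by linarith)
      exact (Icc_subset_Icc le_rfl (by linarith)).trans <| Icc_subset_uIcc.trans <|
        uIcc_Gamma_subset_image_Amap (by linarith) hm
  · rcases s with _ | y <;> dsimp only [window, nextAnchor, block]
    · simpa using Icc_zero_one_subset_image_Bmap 0
    · exact Icc_zero_one_subset_image_Bmap _

end Step

theorem six_le_of_mem_anchor : ∀ n, ∀ y ∈ anchor n, 6 ≤ y
  | 0 => by simp [anchor]
  | n + 1 => six_le_of_mem_nextAnchor (six_le_of_mem_anchor n)

theorem anchor_two_pow_succ_add_two (k : ℕ) :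
    anchor (2 ^ (k + 1) + 2) = some (2 ^ (k + 1) + 7 : ℝ) := by
  simp only [anchor, thueMorse_two_pow_succ_add_one, thueMorse_two_pow, nextAnchor]
  push_cast
  congr 1
  ring

/-- The family of L₁-iterated sequences of `(Amap, Bmap)` contains unbounded
sequences. -/
theorem L1Seq_gamma_sin_exists_unbounded :
    ∃ a : ℝ, ∀ M : ℝ, 0 < M → ∃ n : ℕ, M < |L1Seq Amap Bmap a n| := by
  have hs0 : ∀ n, ∀ y ∈ anchor n, 0 ≤ y := fun n y hy => by
    linarith [six_le_of_mem_anchor n y hy]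
  obtain ⟨a, ha⟩ := exists_forall_mem_of_subset_image
    (fun n => if thueMorse n then Bmap else Amap) (L1Seq Amap Bmap) (fun _ => rfl)
    (fun a n => (ite_apply _ _ _ _).symm) (fun n => block (thueMorse n) (anchor n) n)
    isCompact_block (fun _ => isCompact_block.isClosed) (fun _ => block_nonempty)
    (fun n => continuousOn_block (hs0 n))
    (fun n => (block_subset_window (hs0 (n + 1))).trans
      (window_subset_image (six_le_of_mem_anchor n)))
  refine ⟨a, fun M _ => ?_⟩
  obtain ⟨k, hk⟩ := pow_unbounded_of_one_lt M one_lt_two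
  have hmem := block_subset_window (hs0 _) (ha (2 ^ (k + 1) + 2))
  rw [anchor_two_pow_succ_add_two] at hmem
  refine ⟨_, lt_of_lt_of_le ?_ ((le_abs_self _).trans' hmem.1)⟩
  have : (2 : ℝ) ^ k ≤ 2 ^ (k + 1) := pow_le_pow_right₀ one_le_two (Nat.le_succ k)
  linarith
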